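/- For all a ≠ b in I and all (ν,J) ∈ RC(∞): f_a^* f_b(ν,J) = f_b f_a^*(ν,J), tε_a^*(f_b(ν,J)) = tε_a^*(ν,J), and tε_b(f_a^*(ν,J)) = tε_b(ν,J). -/

import Mathlib

/-! Rigged configurations for generalized Kac–Moody (Borcherds) algebras. -/

/-- A Borcherds–Cartan matrix: integer matrix with `A a a = 2` or `A a a` nonpositive even,
nonpositive off-diagonal entries, and `A a b = 0 ↔ A b a = 0`. -/
structure IsBorcherdsCartan {I : Type*} (A : I → I → ℤ) : Prop where
  diag : ∀ a, A a a = 2 ∨ (A a a ≤ 0 ∧ Even (A a a))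
  offdiag : ∀ a b, a ≠ b → A a b ≤ 0
  zero_iff : ∀ a b, A a b = 0 ↔ A b a = 0

/-- A (raw) rigged configuration: for each color `a ∈ I`, a multiset of pairs
`(row length, rigging)`.  Rows of length `0` with rigging `0` are treated implicitly by the
operators below. -/
abbrev RCraw (I : Type*) := I → Multiset (ℕ × ℤ)

variable {I : Type*} [DecidableEq I]

/-- The empty rigged configuration `(ν_∅, J_∅)`. -/
def emptyRC : RCraw I := fun _ => 0

/-- `|ν^(b)|`, the number of boxes of color `b`. -/
def rcSize (ν : RCraw I) (b : I) : ℤ := ((ν b).map fun p => (p.1 : ℤ)).sum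

/-- The vacancy number `p_i^(a) = -∑_b A a b ∑_{rows j of ν^(b)} min i j`. -/
noncomputable def vac (A : I → I → ℤ) (ν : RCraw I) (a : I) (i : ℕ) : ℤ :=
  -∑ᶠ b, A a b * ((ν b).map fun p => (min i p.1 : ℤ)).sum

/-- The limiting vacancy number `p_∞^(a) = -∑_b A a b |ν^(b)| = ⟨h_a, wt(ν,J)⟩`. -/
noncomputable def pInf (A : I → I → ℤ) (ν : RCraw I) (a : I) : ℤ :=
  -∑ᶠ b, A a b * rcSize ν b

/-- Minimum of a multiset of integers together with `0` (the rigging of the implicit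
length-`0` rows). -/
def minWith0 (s : Multiset ℤ) : ℤ := s.fold min 0

/-- Minimum of a nonempty multiset of integers (junk value `0` on the empty multiset). -/
def minPosRows (s : Multiset ℤ) : ℤ := s.fold min (s.fold max 0)

/-- Maximum of a multiset of naturals together with `0`. -/
def maxWith0 (s : Multiset ℕ) : ℕ := s.fold max 0

/-- Minimum of a nonempty multiset of naturals (junk value on the empty multiset). -/
def minPosRowsN (s : Multiset ℕ) : ℕ := s.fold min (s.fold max 0)

/-- The crystal operator `f_a` on rigged configurations: add a box to a row of maximal
length among the rows of `ν^(a)` whose rigging equals the smallest rigging `x` (with the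
length-`0` rows of rigging `0` included), give the new row the rigging `x - A a a / 2`, and
change all other riggings so that the coriggings are preserved. -/
def fOp (A : I → I → ℤ) (a : I) (ν : RCraw I) : RCraw I :=
  let M := ν a
  let x := minWith0 (M.map Prod.snd)
  let ℓ := maxWith0 ((M.filter fun p => p.2 = x).map Prod.fst)
  fun b =>
    let adj : Multiset (ℕ × ℤ) → Multiset (ℕ × ℤ) :=
      Multiset.map fun p => (p.1, p.2 - if ℓ < p.1 then A b a else 0)
    if b = a then adj (M.erase (ℓ, x)) + {(ℓ + 1, x - A a a / 2)} else adj (ν b)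

/-- Auxiliary for `eOp`: remove a box from a row of minimal (positive) length among the
rows of `ν^(a)` with rigging `x`, give it the rigging `x + A a a / 2` (dropping the row if
its length becomes `0`), and change all other riggings so that the coriggings are
preserved. -/
def eRemove (A : I → I → ℤ) (a : I) (ν : RCraw I) (x : ℤ) : RCraw I :=
  let M := ν a
  let ℓ := minPosRowsN ((M.filter fun p => p.2 = x).map Prod.fst)
  fun b =>
    let adj : Multiset (ℕ × ℤ) → Multiset (ℕ × ℤ) :=
      Multiset.map fun p => (p.1, p.2 + if ℓ ≤ p.1 then A b a else 0)
    if b = a then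
      adj (M.erase (ℓ, x)) + (if ℓ = 1 then 0 else {(ℓ - 1, x + A a a / 2)})
    else adj (ν b)

/-- The crystal operator `e_a` on rigged configurations. -/
def eOp (A : I → I → ℤ) (a : I) (ν : RCraw I) : Option (RCraw I) :=
  if A a a = 2 then
    let x := minWith0 ((ν a).map Prod.snd)
    if x = 0 then none else some (eRemove A a ν x)
  else
    if ν a = 0 ∨ minPosRows ((ν a).map Prod.snd) ≠ -A a a / 2 then none
    else some (eRemove A a ν (-A a a / 2))

/-- The multiset of coriggings `p_i^(a) - x` of the (positive length) rows of `ν^(a)`. -/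
noncomputable def corigs (A : I → I → ℤ) (ν : RCraw I) (a : I) : Multiset ℤ :=
  (ν a).map fun p => vac A ν a p.1 - p.2

open scoped Classical in
/-- The star crystal operator `f_a^*`: add a box to a row of maximal length among the rows
of `ν^(a)` whose corigging equals the smallest corigging `x` (with the length-`0` rows of
corigging `0` included), set the rigging of the new row so that its corigging is
`x - A a a / 2`, and keep all other riggings fixed. -/
noncomputable def fStar (A : I → I → ℤ) (a : I) (ν : RCraw I) : RCraw I :=
  let M := ν a
  let x := minWith0 (corigs A ν a)
  let ℓ := maxWith0 ((M.filter fun p => vac A ν a p.1 - p.2 = x).map Prod.fst)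
  fun b =>
    if b = a then
      M.erase (ℓ, vac A ν a ℓ - x) + {(ℓ + 1, (vac A ν a (ℓ + 1) - A a a) - (x - A a a / 2))}
    else ν b

open scoped Classical in
/-- Auxiliary for `eStarOp`: remove a box from a row of minimal (positive) length among
the rows of `ν^(a)` with corigging `x`, set its rigging so that its corigging is
`x - A a a / 2` (dropping the row if its length becomes `0`), and keep all other riggings
fixed. -/
noncomputable def eStarRemove (A : I → I → ℤ) (a : I) (ν : RCraw I) (x : ℤ) : RCraw I :=
  let M := ν a
  let ℓ := minPosRowsN ((M.filter fun p => vac A ν a p.1 - p.2 = x).map Prod.fst)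
  fun b =>
    if b = a then
      M.erase (ℓ, vac A ν a ℓ - x) +
        (if ℓ = 1 then 0 else {(ℓ - 1, vac A ν a (ℓ - 1) - (x - A a a / 2))})
    else ν b

/-- The star crystal operator `e_a^*`. -/
noncomputable def eStarOp (A : I → I → ℤ) (a : I) (ν : RCraw I) : Option (RCraw I) :=
  if A a a = 2 then
    let x := minWith0 (corigs A ν a)
    if x = 0 then none else some (eStarRemove A a ν x)
  else
    if ν a = 0 ∨ minPosRows (corigs A ν a) ≠ -A a a / 2 then none
    else some (eStarRemove A a ν (-A a a / 2))

/-- `RC(∞)`: the set of rigged configurations generated from the empty rigged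
configuration by the operators `e_a`, `f_a`. -/
inductive RCinf (A : I → I → ℤ) : RCraw I → Prop
  | empty : RCinf A emptyRC
  | fstep (a : I) (ν : RCraw I) : RCinf A ν → RCinf A (fOp A a ν)
  | estep (a : I) (ν ν' : RCraw I) : RCinf A ν → eOp A a ν = some ν' → RCinf A ν'

/-- `RC(∞)^*`: the set of rigged configurations generated from the empty rigged
configuration by the operators `e_a^*`, `f_a^*`. -/
inductive RCinfStar (A : I → I → ℤ) : RCraw I → Prop
  | empty : RCinfStar A emptyRC
  | fstep (a : I) (ν : RCraw I) : RCinfStar A ν → RCinfStar A (fStar A a ν)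
  | estep (a : I) (ν ν' : RCraw I) : RCinfStar A ν → eStarOp A a ν = some ν' → RCinfStar A ν'

/-- Iteration of a partial map. -/
def iterOpt {α : Type*} (g : α → Option α) : ℕ → α → Option α
  | 0, v => some v
  | k + 1, v => (iterOpt g k v).bind g

/-- `tε_a(ν,J) = max {k | e_a^k (ν,J) ≠ 0}`. -/
noncomputable def teRC (A : I → I → ℤ) (a : I) (ν : RCraw I) : ℕ :=
  sSup {k | iterOpt (eOp A a) k ν ≠ none}

/-- `tε_a^*(ν,J) = max {k | (e_a^*)^k (ν,J) ≠ 0}`. -/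
noncomputable def teStarRC (A : I → I → ℤ) (a : I) (ν : RCraw I) : ℕ :=
  sSup {k | iterOpt (eStarOp A a) k ν ≠ none}

/-- `ε_a`: for real `a` the maximal number of applications of `e_a`, for imaginary `a`
zero. -/
noncomputable def epsRC (A : I → I → ℤ) (a : I) (ν : RCraw I) : ℤ :=
  if A a a = 2 then (teRC A a ν : ℤ) else 0

/-- `φ_a(ν,J) = ⟨h_a, wt(ν,J)⟩ + ε_a(ν,J)`. -/
noncomputable def phiRC (A : I → I → ℤ) (a : I) (ν : RCraw I) : ℤ :=
  pInf A ν a + epsRC A a ν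

/-- `ε_a^*`: for real `a` the maximal number of applications of `e_a^*`, for imaginary `a`
zero. -/
noncomputable def epsStarRC (A : I → I → ℤ) (a : I) (ν : RCraw I) : ℤ :=
  if A a a = 2 then (teStarRC A a ν : ℤ) else 0

/-- `φ_a^*(ν,J) = ⟨h_a, wt(ν,J)⟩ + ε_a^*(ν,J)`. -/
noncomputable def phiStarRC (A : I → I → ℤ) (a : I) (ν : RCraw I) : ℤ :=
  pInf A ν a + epsStarRC A a ν

/-- The weight of a rigged configuration, as the coefficient function of
`-∑_a |ν^(a)| α_a`. -/
def wtRC (ν : RCraw I) : I → ℤ := fun b => -rcSize ν b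

/-- For imaginary `a`, `κ_a(ν,J) = tε_a^*(ν,J)·A a a + ⟨h_a, wt(ν,J)⟩`. -/
noncomputable def kappaRC (A : I → I → ℤ) (a : I) (ν : RCraw I) : ℤ :=
  (teStarRC A a ν : ℤ) * A a a + pInf A ν a

/-- For imaginary `a`, `κ_a^*(ν,J) = tε_a(ν,J)·A a a + ⟨h_a, wt(ν,J)⟩`. -/
noncomputable def kappaStarRC (A : I → I → ℤ) (a : I) (ν : RCraw I) : ℤ :=
  (teRC A a ν : ℤ) * A a a + pInf A ν a

/-!
For `a ≠ b`, the operator `f_b` keeps the row lengths of `ν^(a)` and subtracts `A_{ab}` from the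
riggings of the rows longer than the row `ℓ` it lengthens; this is exactly the change of the
vacancy numbers `p_i^(a)`, `i > ℓ`, so every corigging of color `a` survives (`IsVacShift`), and
the same holds for `e_b`. Hence `f_a^*` and `e_a^*` pick the same row before and after `f_b`,
while `f_a^*` does not touch `ν^(b)` at all, so `f_b` and `e_b` pick the same row before and
after `f_a^*`. This gives `f_a^* f_b = f_b f_a^*`, `e_a^* f_b = f_b e_a^*` and
`e_b f_a^* = f_a^* e_b`, and iterating the last two yields the equalities of `tε`.
-/

namespace Multiset

variable {α : Type*}

theorem fold_mem_cons_of_choice (op : α → α → α) [Std.Commutative op] [Std.Associative op]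
    (hop : ∀ x y, op x y = x ∨ op x y = y) (b : α) (s : Multiset α) :
    s.fold op b ∈ b ::ₘ s := by
  induction s using Multiset.induction_on with
  | empty => simp
  | cons x t ih =>
    rw [fold_cons_left]
    rcases hop x (t.fold op b) with h | h <;> rw [h]
    · exact mem_cons_of_mem (mem_cons_self x t)
    · rcases mem_cons.1 ih with h' | h'
      · rw [h']; exact mem_cons_self b _
      · exact mem_cons_of_mem (mem_cons_of_mem h')

theorem fold_min_fold_max_mem [LinearOrder α] (z : α) {s : Multiset α} (hs : s ≠ 0) :
    s.fold min (s.fold max z) ∈ s := by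
  obtain ⟨y, hy⟩ := exists_mem_of_ne_zero hs
  obtain ⟨t, rfl⟩ := exists_cons_of_mem hy
  have hmin : min y ((y ::ₘ t).fold max z) = y := by
    rw [fold_cons_left]; exact min_eq_left (le_max_left _ _)
  rw [fold_cons'_left, hmin]
  exact fold_mem_cons_of_choice min min_choice y t

end Multiset

theorem minWith0_mem {s : Multiset ℤ} (h : minWith0 s ≠ 0) : minWith0 s ∈ s :=
  (Multiset.mem_cons.1 (Multiset.fold_mem_cons_of_choice min min_choice 0 s)).resolve_left h

theorem maxWith0_mem {s : Multiset ℕ} (h : maxWith0 s ≠ 0) : maxWith0 s ∈ s :=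
  (Multiset.mem_cons.1 (Multiset.fold_mem_cons_of_choice max max_choice 0 s)).resolve_left h

theorem minPosRows_mem {s : Multiset ℤ} (h : s ≠ 0) : minPosRows s ∈ s :=
  Multiset.fold_min_fold_max_mem 0 h

theorem minPosRowsN_mem {s : Multiset ℕ} (h : s ≠ 0) : minPosRowsN s ∈ s :=
  Multiset.fold_min_fold_max_mem 0 h

def shiftRig (g : ℕ → ℤ) (M : Multiset (ℕ × ℤ)) : Multiset (ℕ × ℤ) :=
  M.map fun p => (p.1, p.2 + g p.1)

theorem shiftRig_add (g : ℕ → ℤ) (M N : Multiset (ℕ × ℤ)) :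
    shiftRig g (M + N) = shiftRig g M + shiftRig g N :=
  Multiset.map_add _ _ _

theorem shiftRig_singleton (g : ℕ → ℤ) (p : ℕ × ℤ) :
    shiftRig g {p} = {(p.1, p.2 + g p.1)} :=
  Multiset.map_singleton _ _

theorem shiftRig_erase (g : ℕ → ℤ) (M : Multiset (ℕ × ℤ)) (p : ℕ × ℤ) :
    shiftRig g (M.erase p) = (shiftRig g M).erase (p.1, p.2 + g p.1) :=
  Multiset.map_erase _ (fun p q h => by
    simp only [Prod.mk.injEq] at h
    exact Prod.ext h.1 (by rw [h.1] at h; linarith [h.2])) _ _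

/-- The contribution `∑_j min i j` of one color to the vacancy numbers `p_i`. -/
def rowSum (M : Multiset (ℕ × ℤ)) (i : ℕ) : ℤ := (M.map fun p => (min i p.1 : ℤ)).sum

@[simp]
theorem rowSum_zero (i : ℕ) : rowSum 0 i = 0 := rfl

theorem rowSum_shiftRig (g : ℕ → ℤ) (M : Multiset (ℕ × ℤ)) (i : ℕ) :
    rowSum (shiftRig g M) i = rowSum M i := by
  simp only [rowSum, shiftRig, Multiset.map_map, Function.comp_def]

theorem rowSum_add (M N : Multiset (ℕ × ℤ)) (i : ℕ) :
    rowSum (M + N) i = rowSum M i + rowSum N i := by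
  simp [rowSum]

theorem rowSum_singleton (p : ℕ × ℤ) (i : ℕ) : rowSum {p} i = min (i : ℤ) p.1 := by
  simp [rowSum]

theorem rowSum_erase {M : Multiset (ℕ × ℤ)} {p : ℕ × ℤ} (h : p ∈ M) (i : ℕ) :
    rowSum (M.erase p) i = rowSum M i - min (i : ℤ) p.1 := by
  conv_rhs => rw [← Multiset.cons_erase h]
  simp [rowSum]

theorem rowSum_erase_add_succ {M : Multiset (ℕ × ℤ)} {ℓ : ℕ} {x y : ℤ}
    (h : ℓ ≠ 0 → (ℓ, x) ∈ M) (i : ℕ) :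
    rowSum (M.erase (ℓ, x) + {(ℓ + 1, y)}) i = rowSum M i + if ℓ < i then 1 else 0 := by
  rw [rowSum_add, rowSum_singleton]
  by_cases hm : (ℓ, x) ∈ M
  · rw [rowSum_erase hm]
    split_ifs <;> omega
  · rw [Multiset.erase_of_notMem hm, not_imp_comm.1 h hm]
    split_ifs <;> omega

theorem rowSum_erase_add_pred {M : Multiset (ℕ × ℤ)} {ℓ : ℕ} {x y : ℤ} (h : (ℓ, x) ∈ M)
    (hℓ : 1 ≤ ℓ) (i : ℕ) :
    rowSum (M.erase (ℓ, x) + if ℓ = 1 then 0 else {(ℓ - 1, y)}) i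
      = rowSum M i - if ℓ ≤ i then 1 else 0 := by
  rw [rowSum_add, rowSum_erase h]
  rcases eq_or_ne ℓ 1 with rfl | hne
  · rw [if_pos rfl, rowSum_zero]
    split_ifs <;> omega
  · rw [if_neg hne, rowSum_singleton]
    split_ifs <;> omega

/-- The rigging `x` of the row lengthened by `f_a`. -/
def fRig (M : Multiset (ℕ × ℤ)) : ℤ := minWith0 (M.map Prod.snd)

/-- The length `ℓ` of the row lengthened by `f_a` (`0` for a new row). -/
def fLen (M : Multiset (ℕ × ℤ)) : ℕ :=
  maxWith0 ((M.filter fun p => p.2 = fRig M).map Prod.fst)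

/-- The length of the row shortened by `e_a` among the rows of rigging `x`. -/
def eLen (M : Multiset (ℕ × ℤ)) (x : ℤ) : ℕ :=
  minPosRowsN ((M.filter fun p => p.2 = x).map Prod.fst)

theorem fLen_mem {M : Multiset (ℕ × ℤ)} (h : fLen M ≠ 0) : (fLen M, fRig M) ∈ M := by
  obtain ⟨p, hp, hfst⟩ := Multiset.mem_map.1 (maxWith0_mem h)
  obtain ⟨hpM, hsnd⟩ := Multiset.mem_filter.1 hp
  rwa [fLen, ← hfst, ← hsnd]

theorem eLen_mem {M : Multiset (ℕ × ℤ)} {x : ℤ} (hx : x ∈ M.map Prod.snd) :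
    (eLen M x, x) ∈ M := by
  have hne : (M.filter fun p => p.2 = x).map Prod.fst ≠ 0 := by
    obtain ⟨p, hp, hpx⟩ := Multiset.mem_map.1 hx
    have hmem : p.1 ∈ (M.filter fun q => q.2 = x).map Prod.fst :=
      Multiset.mem_map_of_mem _ (Multiset.mem_filter.2 ⟨hp, hpx⟩)
    exact fun h0 => by simp [h0] at hmem
  obtain ⟨p, hp, hfst⟩ := Multiset.mem_map.1 (minPosRowsN_mem hne)
  obtain ⟨hpM, hsnd⟩ := Multiset.mem_filter.1 hp
  rwa [eLen, ← hfst, ← hsnd]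

theorem fOp_apply_self (A : I → I → ℤ) (b : I) (ν : RCraw I) :
    fOp A b ν b = shiftRig (fun i => if fLen (ν b) < i then -A b b else 0)
        ((ν b).erase (fLen (ν b), fRig (ν b))) + {(fLen (ν b) + 1, fRig (ν b) - A b b / 2)} := by
  simp only [fOp, if_pos rfl]
  refine congrArg (· + _) (Multiset.map_congr rfl fun p _ => ?_)
  change (p.1, p.2 - ite (fLen (ν b) < p.1) _ _) = (p.1, p.2 + ite (fLen (ν b) < p.1) _ _)
  split_ifs <;> simp [sub_eq_add_neg]

theorem fOp_apply_ne (A : I → I → ℤ) (b : I) (ν : RCraw I) {c : I} (h : c ≠ b) :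
    fOp A b ν c = shiftRig (fun i => if fLen (ν b) < i then -A c b else 0) (ν c) := by
  simp only [fOp, if_neg h]
  refine Multiset.map_congr rfl fun p _ => ?_
  change (p.1, p.2 - ite (fLen (ν b) < p.1) _ _) = (p.1, p.2 + ite (fLen (ν b) < p.1) _ _)
  split_ifs <;> simp [sub_eq_add_neg]

theorem eRemove_apply_self (A : I → I → ℤ) (b : I) (ν : RCraw I) (x : ℤ) :
    eRemove A b ν x b = shiftRig (fun i => if eLen (ν b) x ≤ i then A b b else 0)
        ((ν b).erase (eLen (ν b) x, x))
      + if eLen (ν b) x = 1 then 0 else {(eLen (ν b) x - 1, x + A b b / 2)} := by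
  simp only [eRemove, if_pos rfl]
  rfl

theorem eRemove_apply_ne (A : I → I → ℤ) (b : I) (ν : RCraw I) (x : ℤ) {c : I} (h : c ≠ b) :
    eRemove A b ν x c = shiftRig (fun i => if eLen (ν b) x ≤ i then A c b else 0) (ν c) := by
  simp only [eRemove, if_neg h]
  rfl

theorem fOp_apply_self_congr (A : I → I → ℤ) (b : I) {ν ν' : RCraw I} (h : ν' b = ν b) :
    fOp A b ν' b = fOp A b ν b := by
  simp only [fOp, if_pos rfl, h]

theorem eRemove_apply_self_congr (A : I → I → ℤ) (b : I) {ν ν' : RCraw I} (x : ℤ)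
    (h : ν' b = ν b) : eRemove A b ν' x b = eRemove A b ν x b := by
  simp only [eRemove, if_pos rfl, h]

/-- Otherwise the `finsum` in `vac` takes the junk value `0`. -/
def FinitelySupported (ν : RCraw I) : Prop := (Function.support ν).Finite

theorem vac_eq_of_rowSum_eq {A : I → I → ℤ} {ν ν' : RCraw I} (hν : FinitelySupported ν)
    {b : I} {i : ℕ} (hc : ∀ c, c ≠ b → rowSum (ν' c) i = rowSum (ν c) i) (a : I) :
    vac A ν' a i = vac A ν a i - A a b * (rowSum (ν' b) i - rowSum (ν b) i) := by
  have hfin : (Function.support ν).Finite := hν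
  set s := insert b hfin.toFinset
  have hsupp : ∀ μ : RCraw I, (∀ c, c ≠ b → rowSum (μ c) i = rowSum (ν c) i) →
      Function.support (fun c => A a c * rowSum (μ c) i) ⊆ s := by
    intro μ hμ c hfc
    by_contra hcs
    rw [Finset.coe_insert, Set.mem_insert_iff, not_or, Finset.mem_coe, Set.Finite.mem_toFinset,
      Function.notMem_support] at hcs
    exact hfc (by simp only [hμ c hcs.1, hcs.2, rowSum_zero, mul_zero])
  have hsum : ∀ μ : RCraw I, (∀ c, c ≠ b → rowSum (μ c) i = rowSum (ν c) i) →
      vac A μ a i = -(A a b * rowSum (μ b) i + ∑ c ∈ s.erase b, A a c * rowSum (ν c) i) := by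
    intro μ hμ
    change -∑ᶠ c, A a c * rowSum (μ c) i = _
    rw [finsum_eq_sum_of_support_subset _ (hsupp μ hμ),
      ← Finset.add_sum_erase s _ (Finset.mem_insert_self b _)]
    congr 2
    exact Finset.sum_congr rfl fun c hc => by rw [hμ c (Finset.ne_of_mem_erase hc)]
  rw [hsum ν' hc, hsum ν fun _ _ => rfl]
  ring

def PositiveRows (ν : RCraw I) : Prop := ∀ c, ∀ p ∈ ν c, 0 < p.1

theorem rowSum_fOp_self (A : I → I → ℤ) (b : I) (ν : RCraw I) (i : ℕ) :
    rowSum (fOp A b ν b) i = rowSum (ν b) i + if fLen (ν b) < i then 1 else 0 := by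
  rw [fOp_apply_self, rowSum_add, rowSum_shiftRig, ← rowSum_add]
  exact rowSum_erase_add_succ fLen_mem i

theorem rowSum_eRemove_self (A : I → I → ℤ) (b : I) {ν : RCraw I} (hpos : PositiveRows ν)
    {x : ℤ} (hx : x ∈ (ν b).map Prod.snd) (i : ℕ) :
    rowSum (eRemove A b ν x b) i = rowSum (ν b) i - if eLen (ν b) x ≤ i then 1 else 0 := by
  rw [eRemove_apply_self, rowSum_add, rowSum_shiftRig, ← rowSum_add]
  exact rowSum_erase_add_pred (eLen_mem hx) (hpos b _ (eLen_mem hx)) i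

theorem vac_fOp {A : I → I → ℤ} {ν : RCraw I} (hν : FinitelySupported ν) (b c : I) (i : ℕ) :
    vac A (fOp A b ν) c i = vac A ν c i + if fLen (ν b) < i then -A c b else 0 := by
  rw [vac_eq_of_rowSum_eq hν (fun d hd => by rw [fOp_apply_ne A b ν hd, rowSum_shiftRig]),
    rowSum_fOp_self]
  split_ifs <;> ring

theorem vac_eRemove {A : I → I → ℤ} {ν : RCraw I} (hν : FinitelySupported ν)
    (hpos : PositiveRows ν) {b : I} {x : ℤ} (hx : x ∈ (ν b).map Prod.snd) (c : I) (i : ℕ) :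
    vac A (eRemove A b ν x) c i = vac A ν c i + if eLen (ν b) x ≤ i then A c b else 0 := by
  rw [vac_eq_of_rowSum_eq hν (fun d hd => by rw [eRemove_apply_ne A b ν x hd, rowSum_shiftRig]),
    rowSum_eRemove_self A b hpos hx]
  split_ifs <;> ring

/-- How `f_b` and `e_b` (`b ≠ a`) act on color `a`: riggings and vacancy numbers move together,
so the coriggings of color `a` do not change. -/
structure IsVacShift (A : I → I → ℤ) (a : I) (g : ℕ → ℤ) (ν ν' : RCraw I) : Prop where
  rows_eq : ν' a = shiftRig g (ν a)
  vac_eq : ∀ i, vac A ν' a i = vac A ν a i + g i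

theorem isVacShift_fOp {A : I → I → ℤ} {a b : I} (hab : a ≠ b) {ν : RCraw I}
    (hν : FinitelySupported ν) :
    IsVacShift A a (fun i => if fLen (ν b) < i then -A a b else 0) ν (fOp A b ν) :=
  ⟨fOp_apply_ne A b ν hab, vac_fOp hν b a⟩

theorem isVacShift_eRemove {A : I → I → ℤ} {a b : I} (hab : a ≠ b) {ν : RCraw I}
    (hν : FinitelySupported ν) (hpos : PositiveRows ν) {x : ℤ} (hx : x ∈ (ν b).map Prod.snd) :
    IsVacShift A a (fun i => if eLen (ν b) x ≤ i then A a b else 0) ν (eRemove A b ν x) :=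
  ⟨eRemove_apply_ne A b ν x hab, vac_eRemove hν hpos hx a⟩

namespace IsVacShift

variable {A : I → I → ℤ} {a : I} {g : ℕ → ℤ} {ν ν' : RCraw I}

omit [DecidableEq I] in
theorem corigs_eq (h : IsVacShift A a g ν ν') : corigs A ν' a = corigs A ν a := by
  rw [corigs, corigs, h.rows_eq, shiftRig, Multiset.map_map]
  refine Multiset.map_congr rfl fun p _ => ?_
  simp only [Function.comp_apply, h.vac_eq]
  ring

omit [DecidableEq I] in
theorem filter_corig_eq (h : IsVacShift A a g ν ν') (x : ℤ) :
    ((ν' a).filter fun p => vac A ν' a p.1 - p.2 = x).map Prod.fst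
      = ((ν a).filter fun p => vac A ν a p.1 - p.2 = x).map Prod.fst := by
  rw [h.rows_eq, shiftRig, Multiset.filter_map, Multiset.map_map]
  congr 1
  refine Multiset.filter_congr fun p _ => ?_
  simp only [Function.comp_apply, h.vac_eq]
  constructor <;> intro <;> linarith

theorem fStar_apply_self (h : IsVacShift A a g ν ν') :
    fStar A a ν' a = shiftRig g (fStar A a ν a) := by
  simp only [fStar, if_pos rfl, h.corigs_eq]
  rw [h.filter_corig_eq]
  generalize maxWith0 _ = ℓ
  rw [h.rows_eq, h.vac_eq, h.vac_eq, shiftRig_add, shiftRig_erase, shiftRig_singleton]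
  congr 3 <;> ring

theorem eStarRemove_apply_self (h : IsVacShift A a g ν ν') (x : ℤ) :
    eStarRemove A a ν' x a = shiftRig g (eStarRemove A a ν x a) := by
  simp only [eStarRemove, if_pos rfl]
  rw [h.filter_corig_eq]
  generalize minPosRowsN _ = ℓ
  rw [h.rows_eq, h.vac_eq, shiftRig_add, shiftRig_erase, add_sub_right_comm]
  congr 1
  split_ifs
  · rfl
  · rw [h.vac_eq, shiftRig_singleton]
    congr 3
    ring

end IsVacShift

theorem fStar_apply_ne (A : I → I → ℤ) (a : I) (ν : RCraw I) {c : I} (h : c ≠ a) :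
    fStar A a ν c = ν c := by
  simp only [fStar, if_neg h]

theorem eStarRemove_apply_ne (A : I → I → ℤ) (a : I) (ν : RCraw I) (x : ℤ) {c : I} (h : c ≠ a) :
    eStarRemove A a ν x c = ν c := by
  simp only [eStarRemove, if_neg h]

omit [DecidableEq I] in
/-- The common pattern of `f_a^*, e_a^*` (`S`) against `f_b, e_b` (`T`): `S` changes only color
`a`, equivariantly under vacancy shifts, while `T` acts on color `b` through `ν^(b)` alone and
shifts the riggings of every other color `c` by an amount `G c (ν^(b))`. -/
theorem comm_of_isVacShift {A : I → I → ℤ} {a b : I} (hab : a ≠ b) {S T : RCraw I → RCraw I}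
    (G : I → Multiset (ℕ × ℤ) → ℕ → ℤ)
    (hS_ne : ∀ μ c, c ≠ a → S μ c = μ c)
    (hS_self : ∀ g μ μ', IsVacShift A a g μ μ' → S μ' a = shiftRig g (S μ a))
    (hT_self : ∀ μ μ', μ' b = μ b → T μ' b = T μ b)
    (hT_ne : ∀ μ c, c ≠ b → T μ c = shiftRig (G c (μ b)) (μ c))
    {ν : RCraw I} (hν : IsVacShift A a (G a (ν b)) ν (T ν)) :
    S (T ν) = T (S ν) := by
  have hSb : S ν b = ν b := hS_ne ν b hab.symm
  funext c
  rcases eq_or_ne c a with rfl | hca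
  · rw [hS_self _ _ _ hν, hT_ne _ _ hab, hSb]
  rw [hS_ne _ _ hca]
  rcases eq_or_ne c b with rfl | hcb
  · exact (hT_self _ _ hSb).symm
  · rw [hT_ne _ _ hcb, hT_ne _ _ hcb, hS_ne _ _ hca, hSb]

/-- The rigging (for `e_a`) or corigging (for `e_a^*`) of the rows acted on, read off the
multiset `S` of riggings, resp. coriggings, of `ν^(a)`; `none` when the operator gives `0`. -/
def eSel (A : I → I → ℤ) (a : I) (S : Multiset ℤ) : Option ℤ :=
  if A a a = 2 then (if minWith0 S = 0 then none else some (minWith0 S))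
  else if S = 0 ∨ minPosRows S ≠ -A a a / 2 then none else some (-A a a / 2)

omit [DecidableEq I] in
theorem mem_of_eSel_eq_some {A : I → I → ℤ} {a : I} {S : Multiset ℤ} {x : ℤ}
    (h : eSel A a S = some x) : x ∈ S := by
  unfold eSel at h
  split_ifs at h with hre hzero hcond
  · exact Option.some_injective _ h ▸ minWith0_mem hzero
  · rw [not_or, not_ne_iff] at hcond
    exact Option.some_injective _ h ▸ hcond.2 ▸ minPosRows_mem hcond.1

theorem eOp_eq_map (A : I → I → ℤ) (a : I) (ν : RCraw I) :
    eOp A a ν = (eSel A a ((ν a).map Prod.snd)).map (eRemove A a ν) := by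
  unfold eOp eSel
  simp only [Multiset.map_eq_zero]
  split_ifs <;> rfl

theorem eStarOp_eq_map (A : I → I → ℤ) (a : I) (ν : RCraw I) :
    eStarOp A a ν = (eSel A a (corigs A ν a)).map (eStarRemove A a ν) := by
  unfold eStarOp eSel
  simp only [corigs, Multiset.map_eq_zero]
  split_ifs <;> simp_all

section Commute

variable {A : I → I → ℤ} {a b : I} {ν : RCraw I}

theorem fStar_fOp_comm (hab : a ≠ b) (hν : FinitelySupported ν) :
    fStar A a (fOp A b ν) = fOp A b (fStar A a ν) :=
  comm_of_isVacShift hab (fun c M i => if fLen M < i then -A c b else 0)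
    (fun _ _ => fStar_apply_ne A a _)
    (fun _ _ _ h => h.fStar_apply_self) (fun _ _ => fOp_apply_self_congr A b)
    (fun _ _ => fOp_apply_ne A b _) (isVacShift_fOp hab hν)

theorem eStarRemove_fOp_comm (hab : a ≠ b) (hν : FinitelySupported ν) (x : ℤ) :
    eStarRemove A a (fOp A b ν) x = fOp A b (eStarRemove A a ν x) :=
  comm_of_isVacShift (S := fun μ => eStarRemove A a μ x) hab
    (fun c M i => if fLen M < i then -A c b else 0) (fun _ _ => eStarRemove_apply_ne A a _ x)
    (fun _ _ _ h => h.eStarRemove_apply_self x) (fun _ _ => fOp_apply_self_congr A b)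
    (fun _ _ => fOp_apply_ne A b _) (isVacShift_fOp hab hν)

theorem fStar_eRemove_comm (hab : a ≠ b) (hν : FinitelySupported ν) (hpos : PositiveRows ν)
    {x : ℤ} (hx : x ∈ (ν b).map Prod.snd) :
    fStar A a (eRemove A b ν x) = eRemove A b (fStar A a ν) x :=
  comm_of_isVacShift (T := fun μ => eRemove A b μ x) hab
    (fun c M i => if eLen M x ≤ i then A c b else 0) (fun _ _ => fStar_apply_ne A a _)
    (fun _ _ _ h => h.fStar_apply_self) (fun _ _ => eRemove_apply_self_congr A b x)
    (fun _ _ => eRemove_apply_ne A b _ x) (isVacShift_eRemove hab hν hpos hx)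

theorem eStarOp_fOp_comm (hab : a ≠ b) (hν : FinitelySupported ν) :
    eStarOp A a (fOp A b ν) = (eStarOp A a ν).map (fOp A b) := by
  rw [eStarOp_eq_map, eStarOp_eq_map, (isVacShift_fOp hab hν).corigs_eq, Option.map_map]
  exact congrArg (Option.map · _) (funext (eStarRemove_fOp_comm hab hν))

theorem eOp_fStar_comm (hab : a ≠ b) (hν : FinitelySupported ν) (hpos : PositiveRows ν) :
    eOp A b (fStar A a ν) = (eOp A b ν).map (fStar A a) := by
  rw [eOp_eq_map, eOp_eq_map, fStar_apply_ne A a ν hab.symm, Option.map_map]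
  cases hsel : eSel A b ((ν b).map Prod.snd) with
  | none => rfl
  | some x => exact congrArg some (fStar_eRemove_comm hab hν hpos (mem_of_eSel_eq_some hsel)).symm

end Commute

theorem exists_eRemove_of_eOp_eq_some {A : I → I → ℤ} {b : I} {ν ν' : RCraw I}
    (h : eOp A b ν = some ν') : ∃ x ∈ (ν b).map Prod.snd, eRemove A b ν x = ν' := by
  rw [eOp_eq_map, Option.map_eq_some_iff] at h
  obtain ⟨x, hx, rfl⟩ := h
  exact ⟨x, mem_of_eSel_eq_some hx, rfl⟩

theorem exists_eStarRemove_of_eStarOp_eq_some {A : I → I → ℤ} {a : I} {ν ν' : RCraw I}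
    (h : eStarOp A a ν = some ν') : ∃ x, eStarRemove A a ν x = ν' := by
  rw [eStarOp_eq_map, Option.map_eq_some_iff] at h
  obtain ⟨x, -, rfl⟩ := h
  exact ⟨x, rfl⟩

omit [DecidableEq I] in
theorem FinitelySupported.of_apply_ne {ν ν' : RCraw I} (a : I) (hν : FinitelySupported ν)
    (h : ∀ c, c ≠ a → ν c = 0 → ν' c = 0) : FinitelySupported ν' := by
  refine (Set.Finite.insert a hν).subset fun c hc => ?_
  by_contra hc'
  rw [Set.mem_insert_iff, not_or, Function.mem_support, not_not] at hc'
  exact hc (h c hc'.1 hc'.2)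

theorem FinitelySupported.fOp {ν : RCraw I} (hν : FinitelySupported ν) (A : I → I → ℤ) (b : I) :
    FinitelySupported (fOp A b ν) :=
  hν.of_apply_ne b fun c hc h0 => by rw [fOp_apply_ne A b ν hc, h0]; rfl

theorem FinitelySupported.eRemove {ν : RCraw I} (hν : FinitelySupported ν) (A : I → I → ℤ)
    (b : I) (x : ℤ) : FinitelySupported (eRemove A b ν x) :=
  hν.of_apply_ne b fun c hc h0 => by rw [eRemove_apply_ne A b ν x hc, h0]; rfl

theorem FinitelySupported.eStarOp {A : I → I → ℤ} {a : I} {ν ν' : RCraw I}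
    (hν : FinitelySupported ν) (h : eStarOp A a ν = some ν') : FinitelySupported ν' := by
  obtain ⟨x, rfl⟩ := exists_eStarRemove_of_eStarOp_eq_some h
  exact hν.of_apply_ne a fun c hc h0 => by rw [eStarRemove_apply_ne A a ν x hc, h0]

theorem PositiveRows.fOp {ν : RCraw I} (hν : PositiveRows ν) (A : I → I → ℤ) (b : I) :
    PositiveRows (fOp A b ν) := by
  intro c p hp
  rcases eq_or_ne c b with rfl | hcb
  · rw [fOp_apply_self, Multiset.mem_add, Multiset.mem_singleton] at hp
    rcases hp with hp | rfl
    · obtain ⟨q, hq, rfl⟩ := Multiset.mem_map.1 hp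
      exact hν c q (Multiset.mem_of_mem_erase hq)
    · exact Nat.succ_pos _
  · rw [fOp_apply_ne A b ν hcb] at hp
    obtain ⟨q, hq, rfl⟩ := Multiset.mem_map.1 hp
    exact hν c q hq

theorem PositiveRows.eRemove {ν : RCraw I} (hν : PositiveRows ν) (A : I → I → ℤ) {b : I}
    {x : ℤ} (hx : x ∈ (ν b).map Prod.snd) : PositiveRows (eRemove A b ν x) := by
  intro c p hp
  rcases eq_or_ne c b with rfl | hcb
  · have hℓ := hν c _ (eLen_mem hx)
    rw [eRemove_apply_self, Multiset.mem_add] at hp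
    rcases hp with hp | hp
    · obtain ⟨q, hq, rfl⟩ := Multiset.mem_map.1 hp
      exact hν c q (Multiset.mem_of_mem_erase hq)
    · split_ifs at hp with h1
      · simp at hp
      · rw [Multiset.mem_singleton] at hp
        subst hp
        exact Nat.sub_pos_of_lt (lt_of_le_of_ne hℓ (Ne.symm h1))
  · rw [eRemove_apply_ne A b ν x hcb] at hp
    obtain ⟨q, hq, rfl⟩ := Multiset.mem_map.1 hp
    exact hν c q hq

theorem finitelySupported_positiveRows_of_eOp {A : I → I → ℤ} {b : I} {ν ν' : RCraw I}
    (hν : FinitelySupported ν ∧ PositiveRows ν) (h : eOp A b ν = some ν') :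
    FinitelySupported ν' ∧ PositiveRows ν' := by
  obtain ⟨x, hx, rfl⟩ := exists_eRemove_of_eOp_eq_some h
  exact ⟨hν.1.eRemove A b x, hν.2.eRemove A hx⟩

theorem RCinf.finitelySupported_positiveRows {A : I → I → ℤ} {ν : RCraw I} (h : RCinf A ν) :
    FinitelySupported ν ∧ PositiveRows ν := by
  induction h with
  | empty =>
    refine ⟨?_, fun c p hp => by simp [emptyRC] at hp⟩
    show (Function.support fun _ : I => (0 : Multiset (ℕ × ℤ))).Finite
    simp
  | fstep b _ _ ih => exact ⟨ih.1.fOp A b, ih.2.fOp A b⟩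
  | estep _ _ _ _ he ih => exact finitelySupported_positiveRows_of_eOp ih he

section Iteration

variable {α : Type*} {g : α → Option α} {f : α → α} {P : α → Prop}

theorem iterOpt_preserves (hP : ∀ v w, P v → g v = some w → P w) (k : ℕ) {v w : α} (hv : P v)
    (h : iterOpt g k v = some w) : P w := by
  induction k generalizing w with
  | zero => exact Option.some_injective _ h ▸ hv
  | succ k ih =>
    obtain ⟨u, hu, hw⟩ := Option.bind_eq_some_iff.1 h
    exact hP u w (ih hu) hw

theorem iterOpt_map_comm (hP : ∀ v w, P v → g v = some w → P w)
    (hcomm : ∀ v, P v → g (f v) = (g v).map f) (k : ℕ) {v : α} (hv : P v) :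
    iterOpt g k (f v) = (iterOpt g k v).map f := by
  induction k with
  | zero => rfl
  | succ k ih =>
    rw [iterOpt, iterOpt, ih]
    cases hk : iterOpt g k v with
    | none => rfl
    | some u => exact hcomm u (iterOpt_preserves hP k hv hk)

theorem sSup_iterOpt_map_comm (hP : ∀ v w, P v → g v = some w → P w)
    (hcomm : ∀ v, P v → g (f v) = (g v).map f) {v : α} (hv : P v) :
    sSup {k | iterOpt g k (f v) ≠ none} = sSup {k | iterOpt g k v ≠ none} := by
  simp_rw [iterOpt_map_comm hP hcomm _ hv, ne_eq, Option.map_eq_none_iff]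

end Iteration

theorem rc_fstar_f_commute_general {I : Type*} [DecidableEq I] (A : I → I → ℤ) :
    ∀ a b : I, a ≠ b → ∀ ν : RCraw I, RCinf A ν →
      fStar A a (fOp A b ν) = fOp A b (fStar A a ν) ∧
      teStarRC A a (fOp A b ν) = teStarRC A a ν ∧
      teRC A b (fStar A a ν) = teRC A b ν := by
  intro a b hab ν hν
  obtain ⟨hfin, hpos⟩ := hν.finitelySupported_positiveRows
  refine ⟨fStar_fOp_comm hab hfin, ?_, ?_⟩
  · exact sSup_iterOpt_map_comm (fun _ _ hμ he => hμ.eStarOp he)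
      (fun _ hμ => eStarOp_fOp_comm hab hμ) hfin
  · exact sSup_iterOpt_map_comm (fun _ _ => finitelySupported_positiveRows_of_eOp)
      (fun _ hμ => eOp_fStar_comm hab hμ.1 hμ.2) ⟨hfin, hpos⟩

/-- For `a ≠ b` and `(ν,J) ∈ RC(∞)`: `f_a^* f_b = f_b f_a^*`,
`tε_a^*(f_b(ν,J)) = tε_a^*(ν,J)` and `tε_b(f_a^*(ν,J)) = tε_b(ν,J)`. -/
theorem rc_fstar_f_commute {I : Type*} [DecidableEq I] (A : I → I → ℤ)
    (hA : IsBorcherdsCartan A) :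
    ∀ a b : I, a ≠ b → ∀ ν : RCraw I, RCinf A ν →
      fStar A a (fOp A b ν) = fOp A b (fStar A a ν) ∧
      teStarRC A a (fOp A b ν) = teStarRC A a ν ∧
      teRC A b (fStar A a ν) = teRC A b ν :=
  rc_fstar_f_commute_general A
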